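/- arXiv:1812.09674 — 7 statements merged into one kernel-verified Lean document; each statement's English description precedes it below -/
import Mathlib

section
/- Let w ≥ 1 and i ≥ 0 be integers, and define a sequence of functions φ_0, φ_1, ..., φ_i : ℝ → ℝ by φ_0(s) = e^s and, for j ≥ 1, φ_j(s) = (w·e^s)/(w+j) + (e^s/(w+j))·∑_{l=0}^{j-1} φ_l(s). Then for all i ≥ 1 and all s, φ_i(s) = e^s · ∏_{j=1}^{i} (w + j - 1 + e^s)/(w + j). -/
/-!
Writing `S_j = ∑_{l<j} φ_l`, the recursion reads `(w + j) φ_j = e^s (w + S_j)`. Subtracting two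
consecutive instances telescopes the sums away: `(w + j + 1) φ_{j+1} = (w + j + e^s) φ_j`, and this
also holds for `j = 0` because `φ_0 = e^s`. The closed form is the product of these ratios.
-/

open Finset Real

theorem mul_succ_eq_of_sum_recurrence {R : Type*} [CommRing R] {a c : R} {x : ℕ → R}
    (h0 : x 0 = c) (hrec : ∀ j, 1 ≤ j → (a + j) * x j = c * (a + ∑ l ∈ range j, x l)) (j : ℕ) :
    (a + j + 1) * x (j + 1) = (a + j + c) * x j := by
  rw [(by push_cast; ring : (a + j + 1 : R) = a + ↑(j + 1)), hrec (j + 1) (Nat.le_add_left 1 j),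
    sum_range_succ]
  rcases j.eq_zero_or_pos with rfl | hj
  · simp only [range_zero, sum_empty, Nat.cast_zero, h0]
    ring
  · linear_combination -hrec j hj

theorem eq_mul_prod_Icc_of_forall_succ {M : Type*} [CommMonoid M] {x r : ℕ → M}
    (h : ∀ j, x (j + 1) = x j * r (j + 1)) (i : ℕ) : x i = x 0 * ∏ j ∈ Icc 1 i, r j := by
  induction i with
  | zero => simp
  | succ i ih => rw [h, ih, prod_Icc_succ_top (Nat.le_add_left 1 i), mul_assoc]

theorem anchorhash_mgf_closed_form_general
    (w : ℕ) (φ : ℕ → ℝ → ℝ)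
    (h0 : ∀ s, φ 0 s = Real.exp s)
    (hrec : ∀ j, 1 ≤ j → ∀ s,
      φ j s = (w * Real.exp s) / ((w : ℝ) + j)
        + (Real.exp s / ((w : ℝ) + j)) * ∑ l ∈ Finset.range j, φ l s) :
    ∀ i, 1 ≤ i → ∀ s,
      φ i s = Real.exp s *
        ∏ j ∈ Finset.Icc 1 i, ((w : ℝ) + j - 1 + Real.exp s) / ((w : ℝ) + j) := by
  intro i _ s
  have hcleared : ∀ j, 1 ≤ j →
      ((w : ℝ) + j) * φ j s = Real.exp s * (w + ∑ l ∈ range j, φ l s) := by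
    intro j hj
    have hpos : (0 : ℝ) < w + j := by positivity
    rw [hrec j hj s]
    field_simp
  have hratio : ∀ j, φ (j + 1) s =
      φ j s * (((w : ℝ) + ↑(j + 1) - 1 + Real.exp s) / ((w : ℝ) + ↑(j + 1))) := by
    intro j
    have hpos : (0 : ℝ) < w + ↑(j + 1) := by positivity
    rw [mul_div_assoc', eq_div_iff hpos.ne', mul_comm, Nat.cast_succ, ← add_assoc,
      mul_succ_eq_of_sum_recurrence (h0 s) hcleared j]
    ring
  rw [eq_mul_prod_Icc_of_forall_succ (x := fun j => φ j s)
    (r := fun j => ((w : ℝ) + j - 1 + Real.exp s) / ((w : ℝ) + j)) hratio i, h0]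

theorem anchorhash_mgf_closed_form
    (w : ℕ) (hw : 1 ≤ w) (φ : ℕ → ℝ → ℝ)
    (h0 : ∀ s, φ 0 s = Real.exp s)
    (hrec : ∀ j, 1 ≤ j → ∀ s,
      φ j s = (w * Real.exp s) / ((w : ℝ) + j)
        + (Real.exp s / ((w : ℝ) + j)) * ∑ l ∈ Finset.range j, φ l s) :
    ∀ i, 1 ≤ i → ∀ s,
      φ i s = Real.exp s *
        ∏ j ∈ Finset.Icc 1 i, ((w : ℝ) + j - 1 + Real.exp s) / ((w : ℝ) + j) :=
  anchorhash_mgf_closed_form_general w φ h0 hrec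
end

section
/- For integers 1 ≤ w ≤ a, we have ∑_{j=1}^{a-w} (w+j-1)/(w+j)^2 ≤ ln(a/w). -/
open Finset Real

/-! Each term satisfies `(y - 1) / y² ≤ 1 / y`, and `1 / (x + 1) ≤ log (x + 1) - log x`, so the
sum is dominated by a telescoping sum of logarithms equal to `log (a / w)`. -/

lemma inv_add_one_le_log_add_one_sub_log {x : ℝ} (hx : 0 < x) :
    (x + 1)⁻¹ ≤ log (x + 1) - log x := by
  have h := one_sub_inv_le_log_of_pos (div_pos (by positivity : 0 < x + 1) hx)
  rwa [log_div (by positivity) hx.ne', inv_div, one_sub_div (by positivity), add_sub_cancel_left,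
    one_div] at h

lemma sum_Icc_inv_add_le_log_sub_log {x : ℝ} (hx : 0 < x) (m : ℕ) :
    ∑ j ∈ Icc 1 m, (x + j)⁻¹ ≤ log (x + m) - log x := by
  induction m with
  | zero => simp
  | succ m ih =>
    rw [sum_Icc_succ_top (by omega), Nat.cast_succ, ← add_assoc]
    linarith [inv_add_one_le_log_add_one_sub_log (by positivity : 0 < x + m)]

lemma sub_one_div_sq_le_inv {y : ℝ} (hy : 0 < y) : (y - 1) / y ^ 2 ≤ y⁻¹ := by
  calc (y - 1) / y ^ 2 ≤ y / y ^ 2 := by gcongr; linarith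
    _ = y⁻¹ := by field_simp

theorem anchorhash_variance_bound (w a : ℕ) (hw : 1 ≤ w) (hwa : w ≤ a) :
    ∑ j ∈ Finset.Icc 1 (a - w), ((w : ℝ) + j - 1) / ((w : ℝ) + j) ^ 2
      ≤ Real.log ((a : ℝ) / (w : ℝ)) := by
  obtain ⟨m, rfl⟩ := Nat.exists_eq_add_of_le hwa
  have hw₀ : (0 : ℝ) < w := by exact_mod_cast hw
  rw [Nat.add_sub_cancel_left, Nat.cast_add, log_div (by positivity) hw₀.ne']
  calc ∑ j ∈ Icc 1 m, ((w : ℝ) + j - 1) / ((w : ℝ) + j) ^ 2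
      ≤ ∑ j ∈ Icc 1 m, ((w : ℝ) + j)⁻¹ :=
        sum_le_sum fun j _ => sub_one_div_sq_le_inv (by positivity)
    _ ≤ log (w + m) - log w := sum_Icc_inv_add_le_log_sub_log hw₀ m
end

section
/- For a = 2w (i.e., 50% of buckets removed), the expected number of hash operations in AnchorHash satisfies E[τ] = 1 + ∑_{j=1}^{w} 1/(w+j) ≤ 1 + ln 2 < 1.694, and Var(τ) ≤ ln 2, so the standard deviation is less than 0.833. -/
open Finset Real

/- Both sums are dominated by `∑_{j=1}^{w} 1/(w+j)`, and since `1/x ≤ log x - log (x - 1)` this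
harmonic block telescopes to at most `log (2w) - log w = log 2`. The numerical bounds follow from
`log 2 < 0.6931471808 < 0.833 ^ 2`. -/

lemma one_div_le_log_sub_log_sub_one {x : ℝ} (hx : 1 < x) :
    1 / x ≤ log x - log (x - 1) := by
  have hx₀ : x ≠ 0 := by positivity
  have hx₁ : x - 1 ≠ 0 := by linarith
  calc 1 / x = 1 - (x / (x - 1))⁻¹ := by field_simp; ring
    _ ≤ log (x / (x - 1)) := one_sub_inv_le_log_of_pos (div_pos (by linarith) (by linarith))
    _ = log x - log (x - 1) := log_div hx₀ hx₁

lemma sum_Icc_one_div_add_le_log_sub_log {m : ℝ} (hm : 0 < m) (n : ℕ) :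
    ∑ j ∈ Icc 1 n, 1 / (m + j) ≤ log (m + n) - log m := by
  induction n with
  | zero => simp
  | succ n ih =>
    rw [sum_Icc_succ_top (by omega)]
    have hstep := one_div_le_log_sub_log_sub_one (x := m + (n + 1 : ℕ)) (by push_cast; linarith)
    push_cast at hstep ⊢
    simp only [← add_assoc, add_sub_cancel_right] at hstep ⊢
    linarith

lemma sum_Icc_one_div_nat_add_le_log_two {w : ℕ} (hw : 1 ≤ w) :
    ∑ j ∈ Icc 1 w, 1 / ((w : ℝ) + j) ≤ log 2 := by
  have hw₀ : (0 : ℝ) < w := by exact_mod_cast hw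
  calc ∑ j ∈ Icc 1 w, 1 / ((w : ℝ) + j) ≤ log (w + w) - log w :=
        sum_Icc_one_div_add_le_log_sub_log hw₀ w
    _ = log 2 := by rw [← two_mul, log_mul two_ne_zero hw₀.ne', add_sub_cancel_right]

lemma sub_one_div_sq_le_one_div (x : ℝ) : (x - 1) / x ^ 2 ≤ 1 / x := by
  have hsplit : (x - 1) / x ^ 2 = 1 / x - (1 / x) ^ 2 := by
    rcases eq_or_ne x 0 with rfl | hx
    · simp
    · field_simp
  linarith [sq_nonneg (1 / x)]

lemma sqrt_log_two_lt : √(log 2) < 0.833 := by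
  rw [sqrt_lt' (by norm_num)]
  linarith [log_two_lt_d9]

/-- AnchorHash with `a = 2w` (50% of buckets removed):
`E[τ] = 1 + ∑_{j=1}^{w} 1/(w+j) ≤ 1 + ln 2 < 1.694`, `Var(τ) ≤ ln 2`, and the
standard deviation is less than `0.833`. -/
theorem anchorhash_half_removed (w : ℕ) (hw : 1 ≤ w) :
    1 + ∑ j ∈ Finset.Icc 1 w, 1 / ((w : ℝ) + j) ≤ 1 + Real.log 2
      ∧ (1 : ℝ) + Real.log 2 < 1.694
      ∧ ∑ j ∈ Finset.Icc 1 w, ((w : ℝ) + j - 1) / ((w : ℝ) + j) ^ 2 ≤ Real.log 2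
      ∧ Real.sqrt (Real.log 2) < 0.833 := by
  have hharmonic := sum_Icc_one_div_nat_add_le_log_two hw
  refine ⟨by linarith, by linarith [log_two_lt_d9], ?_, sqrt_log_two_lt⟩
  calc ∑ j ∈ Icc 1 w, ((w : ℝ) + j - 1) / ((w : ℝ) + j) ^ 2
      ≤ ∑ j ∈ Icc 1 w, 1 / ((w : ℝ) + j) :=
        sum_le_sum fun j _ => sub_one_div_sq_le_one_div _
    _ ≤ log 2 := hharmonic
end

section
/- Let τ_i (0 ≤ i ≤ m) be nonnegative-integer random variables with τ_0 = 1 a.s., and suppose for i ≥ 1: P(τ_i = 1) = w/(w+i), and conditioned on an event of probability 1/(w+i) for each j < i, τ_i is distributed as 1 + τ_j (with these events partitioning the complement of {τ_i = 1}). Then E[τ_i] = 1 + ∑_{j=1}^{i} 1/(w+j) for all 0 ≤ i ≤ m. -/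
/-! Split `E[τ i]` over `{τ i = 1}` and the events `B j`: on `B j` the law of `τ i` is `μ (B j)`
times the law of `1 + τ j`, so `E[τ i] = w/(w+i) + (1/(w+i)) ∑_{j<i} (1 + E[τ j])`. The closed
form `c i = 1 + ∑_{j=1}^{i} 1/(w+j)` satisfies the same recursion, because
`(w+i+1) c (i+1) - (w+i) c i = 1 + c i`, and strong induction on `i` concludes. Expectations are
taken as lower Lebesgue integrals in `ℝ≥0∞`, so integrability only matters in the last step. -/

open MeasureTheory ProbabilityTheory Finset
open scoped ENNReal

section Distribution

variable {Ω α : Type*} [MeasurableSpace Ω] {μ : Measure Ω}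
  [MeasurableSpace α] [Countable α] [MeasurableSingletonClass α]
  {f g : Ω → α} {B : Set Ω} {c : ℝ≥0∞}

theorem map_restrict_eq_smul_map (hf : Measurable f) (hg : Measurable g)
    (h : ∀ a, μ ({ω | f ω = a} ∩ B) = μ {ω | g ω = a} * c) :
    (μ.restrict B).map f = c • μ.map g := by
  refine Measure.ext_of_singleton fun a => ?_
  rw [Measure.map_apply hf (measurableSet_singleton a), Measure.smul_apply,
    Measure.map_apply hg (measurableSet_singleton a),
    Measure.restrict_apply (hf (measurableSet_singleton a)), smul_eq_mul, mul_comm]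
  exact h a

theorem setLIntegral_comp_eq_mul_lintegral_comp (hf : Measurable f) (hg : Measurable g)
    (h : ∀ a, μ ({ω | f ω = a} ∩ B) = μ {ω | g ω = a} * c) (φ : α → ℝ≥0∞) :
    ∫⁻ ω in B, φ (f ω) ∂μ = c * ∫⁻ ω, φ (g ω) ∂μ := by
  rw [← lintegral_map (measurable_of_countable φ) hf, map_restrict_eq_smul_map hf hg h,
    lintegral_smul_measure, lintegral_map (measurable_of_countable φ) hg, smul_eq_mul]

end Distribution

theorem lintegral_eq_setLIntegral_add_sum_of_compl_eq_biUnion {Ω ι : Type*} [MeasurableSpace Ω]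
    {μ : Measure Ω} (f : Ω → ℝ≥0∞) {A : Set Ω} (hA : MeasurableSet A) {s : Finset ι}
    {B : ι → Set Ω} (hB : ∀ j ∈ s, MeasurableSet (B j)) (hdisj : (s : Set ι).PairwiseDisjoint B)
    (hcover : Aᶜ = ⋃ j ∈ s, B j) :
    ∫⁻ ω, f ω ∂μ = ∫⁻ ω in A, f ω ∂μ + ∑ j ∈ s, ∫⁻ ω in B j, f ω ∂μ := by
  rw [← lintegral_add_compl f hA, hcover, lintegral_biUnion_finset hdisj hB]

theorem lintegral_natCast_eq_of_mixture {Ω ι : Type*} [MeasurableSpace Ω] {μ : Measure Ω}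
    [IsProbabilityMeasure μ] {X : Ω → ℕ} {Y : ι → Ω → ℕ} {s : Finset ι} {B : ι → Set Ω}
    (hX : Measurable X) (hY : ∀ j ∈ s, Measurable (Y j))
    (hB : ∀ j ∈ s, MeasurableSet (B j)) (hdisj : (s : Set ι).PairwiseDisjoint B)
    (hcover : {ω | X ω ≠ 1} = ⋃ j ∈ s, B j)
    (hmix : ∀ j ∈ s, ∀ n, μ ({ω | X ω = n} ∩ B j) = μ {ω | 1 + Y j ω = n} * μ (B j)) :
    ∫⁻ ω, (X ω : ℝ≥0∞) ∂μ
      = μ {ω | X ω = 1} + ∑ j ∈ s, μ (B j) * (1 + ∫⁻ ω, (Y j ω : ℝ≥0∞) ∂μ) := by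
  have hA : MeasurableSet {ω | X ω = 1} := hX (measurableSet_singleton 1)
  rw [lintegral_eq_setLIntegral_add_sum_of_compl_eq_biUnion _ hA hB hdisj hcover]
  congr 1
  · rw [setLIntegral_congr_fun hA (g := 1) fun ω (hω : X ω = 1) => by simp [hω]]
    simp
  · refine sum_congr rfl fun j hj => ?_
    have hY' : Measurable fun ω => 1 + Y j ω := measurable_const.add (hY j hj)
    rw [setLIntegral_comp_eq_mul_lintegral_comp hX hY' (hmix j hj) (fun n : ℕ => (n : ℝ≥0∞))]
    push_cast
    rw [lintegral_add_left measurable_const, lintegral_one, measure_univ]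

theorem integral_natCast_eq_toReal_lintegral {Ω : Type*} [MeasurableSpace Ω] {μ : Measure Ω}
    {X : Ω → ℕ} (hX : Measurable X) :
    ∫ ω, (X ω : ℝ) ∂μ = (∫⁻ ω, (X ω : ℝ≥0∞) ∂μ).toReal := by
  have hX' : Measurable fun ω => (X ω : ℝ≥0∞) := measurable_from_top.comp hX
  simpa only [ENNReal.toReal_natCast] using
    integral_toReal hX'.aemeasurable (ae_of_all _ fun ω => ENNReal.natCast_lt_top (X ω))

section ShiftedHarmonic

noncomputable def shiftedHarmonic (w : ℝ) (i : ℕ) : ℝ := ∑ j ∈ Icc 1 i, 1 / (w + j)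

variable {w : ℝ}

theorem shiftedHarmonic_zero : shiftedHarmonic w 0 = 0 := rfl

theorem shiftedHarmonic_succ (i : ℕ) :
    shiftedHarmonic w (i + 1) = shiftedHarmonic w i + 1 / (w + (i + 1)) := by
  rw [shiftedHarmonic, sum_Icc_succ_top (by omega), Nat.cast_succ, shiftedHarmonic]

theorem shiftedHarmonic_nonneg (hw : 0 ≤ w) (i : ℕ) : 0 ≤ shiftedHarmonic w i :=
  sum_nonneg fun j _ => by positivity

theorem add_mul_one_add_shiftedHarmonic (hw : 0 ≤ w) (i : ℕ) :
    (w + i) * (1 + shiftedHarmonic w i) = w + ∑ j ∈ range i, (1 + (1 + shiftedHarmonic w j)) := by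
  induction i with
  | zero => simp [shiftedHarmonic_zero]
  | succ i ih =>
    have hpos : w + (i + 1) ≠ 0 := by positivity
    rw [shiftedHarmonic_succ, sum_range_succ, Nat.cast_succ]
    field_simp
    linear_combination ih

theorem one_add_shiftedHarmonic_eq (hw : 0 ≤ w) {i : ℕ} (hi : 0 < i) :
    1 + shiftedHarmonic w i
      = w / (w + i) + ∑ j ∈ range i, 1 / (w + i) * (1 + (1 + shiftedHarmonic w j)) := by
  have hpos : w + i ≠ 0 := by positivity
  rw [← mul_sum, one_div_mul_eq_div, ← add_div, ← add_mul_one_add_shiftedHarmonic hw,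
    mul_div_cancel_left₀ _ hpos]

end ShiftedHarmonic

theorem eq_ofReal_one_add_shiftedHarmonic_of_recursion {w m : ℕ} {E : ℕ → ℝ≥0∞} (h0 : E 0 = 1)
    (hrec : ∀ i, 0 < i → i ≤ m →
      E i = w / (w + i) + ∑ j ∈ range i, 1 / ((w : ℝ≥0∞) + i) * (1 + E j)) :
    ∀ i ≤ m, E i = ENNReal.ofReal (1 + shiftedHarmonic w i) := by
  have hw : (0 : ℝ) ≤ w := Nat.cast_nonneg w
  intro i
  induction i using Nat.strong_induction_on with
  | _ i IH =>
    intro him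
    rcases Nat.eq_zero_or_pos i with rfl | hi
    · rw [h0, shiftedHarmonic_zero, add_zero, ENNReal.ofReal_one]
    have hpos : (0 : ℝ) < w + i := by positivity
    have hterm : ∀ j ∈ range i, 1 / ((w : ℝ≥0∞) + i) * (1 + E j)
        = ENNReal.ofReal (1 / ((w : ℝ) + i) * (1 + (1 + shiftedHarmonic w j))) := by
      intro j hj
      have hji := mem_range.mp hj
      have := shiftedHarmonic_nonneg hw j
      rw [IH j hji (by omega), ENNReal.ofReal_mul (by positivity), ENNReal.ofReal_div_of_pos hpos,
        ENNReal.ofReal_add zero_le_one (by positivity : 0 ≤ 1 + shiftedHarmonic w j)]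
      norm_cast
    have hsum_nonneg : ∀ j ∈ range i, 0 ≤ 1 / ((w : ℝ) + i) * (1 + (1 + shiftedHarmonic w j)) :=
      fun j _ => by have := shiftedHarmonic_nonneg hw j; positivity
    rw [hrec i hi him, sum_congr rfl hterm, one_add_shiftedHarmonic_eq hw hi,
      ENNReal.ofReal_add (by positivity) (sum_nonneg hsum_nonneg),
      ENNReal.ofReal_sum_of_nonneg hsum_nonneg, ENNReal.ofReal_div_of_pos hpos]
    norm_cast

theorem anchorhash_recursive_expectation_general
    {Ω : Type*} [MeasurableSpace Ω] (μ : Measure Ω) [IsProbabilityMeasure μ]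
    (m w : ℕ) (τ : ℕ → Ω → ℕ)
    (h_meas : ∀ i, i ≤ m → Measurable (τ i))
    (h0 : ∀ᵐ ω ∂μ, τ 0 ω = 1)
    (hrec : ∀ i, 1 ≤ i → i ≤ m → ∃ B : ℕ → Set Ω,
      (∀ j, j < i → MeasurableSet (B j))
      ∧ (∀ j l, j < i → l < i → j ≠ l → Disjoint (B j) (B l))
      ∧ (∀ j, j < i → Disjoint {ω | τ i ω = 1} (B j))
      ∧ (∀ j, j < i → μ (B j) = 1 / ((w : ℝ≥0∞) + i))
      ∧ μ {ω | τ i ω = 1} = (w : ℝ≥0∞) / ((w : ℝ≥0∞) + i)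
      ∧ {ω | τ i ω ≠ 1} = ⋃ j ∈ Finset.range i, B j
      ∧ ∀ j, j < i → ∀ n : ℕ,
          μ ({ω | τ i ω = n} ∩ B j) = μ {ω | 1 + τ j ω = n} * μ (B j)) :
    ∀ i, i ≤ m → ∫ ω, (τ i ω : ℝ) ∂μ = 1 + ∑ j ∈ Finset.Icc 1 i, 1 / ((w : ℝ) + j) := by
  have hexp : ∀ i ≤ m, ∫⁻ ω, (τ i ω : ℝ≥0∞) ∂μ = ENNReal.ofReal (1 + shiftedHarmonic w i) := by
    refine eq_ofReal_one_add_shiftedHarmonic_of_recursion ?_ fun i hi him => ?_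
    · rw [lintegral_congr_ae (g := fun _ => 1) (h0.mono fun ω hω => by simp [hω]), lintegral_one,
        measure_univ]
    obtain ⟨B, hBm, hBd, -, hBμ, h1μ, hcover, hmix⟩ := hrec i hi him
    rw [lintegral_natCast_eq_of_mixture (s := range i) (h_meas i him)
        (fun j hj => h_meas j ((mem_range.mp hj).le.trans him))
        (fun j hj => hBm j (mem_range.mp hj))
        (fun j hj l hl => hBd j l (mem_range.mp hj) (mem_range.mp hl)) hcover
        (fun j hj => hmix j (mem_range.mp hj)), h1μ]
    exact congrArg _ (sum_congr rfl fun j hj => by rw [hBμ j (mem_range.mp hj)])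
  intro i him
  have := shiftedHarmonic_nonneg (Nat.cast_nonneg w) i
  rw [integral_natCast_eq_toReal_lintegral (h_meas i him), hexp i him,
    ENNReal.toReal_ofReal (by positivity), shiftedHarmonic]

/-- **Recursive characterization of the hash-count distribution in AnchorHash.**
`τ i` (for `0 ≤ i ≤ m`) are nonnegative-integer random variables with `τ 0 = 1` a.s.;
for `i ≥ 1`, `P(τ i = 1) = w/(w+i)` and, for each `j < i`, conditioned on an event
`B j` of probability `1/(w+i)`, `τ i` is distributed as `1 + τ j`, the events `B j`
(for `j < i`) partitioning the complement of `{τ i = 1}`.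
Then `E[τ i] = 1 + ∑_{j=1}^{i} 1/(w+j)`. -/
theorem anchorhash_recursive_expectation
    {Ω : Type*} [MeasurableSpace Ω] (μ : Measure Ω) [IsProbabilityMeasure μ]
    (m w : ℕ) (hw : 1 ≤ w) (τ : ℕ → Ω → ℕ)
    (h_meas : ∀ i, i ≤ m → Measurable (τ i))
    (h0 : ∀ᵐ ω ∂μ, τ 0 ω = 1)
    (hrec : ∀ i, 1 ≤ i → i ≤ m → ∃ B : ℕ → Set Ω,
      (∀ j, j < i → MeasurableSet (B j))
      ∧ (∀ j l, j < i → l < i → j ≠ l → Disjoint (B j) (B l))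
      ∧ (∀ j, j < i → Disjoint {ω | τ i ω = 1} (B j))
      ∧ (∀ j, j < i → μ (B j) = 1 / ((w : ℝ≥0∞) + i))
      ∧ μ {ω | τ i ω = 1} = (w : ℝ≥0∞) / ((w : ℝ≥0∞) + i)
      ∧ {ω | τ i ω ≠ 1} = ⋃ j ∈ Finset.range i, B j
      ∧ ∀ j, j < i → ∀ n : ℕ,
          μ ({ω | τ i ω = n} ∩ B j) = μ {ω | 1 + τ j ω = n} * μ (B j)) :
    ∀ i, i ≤ m → ∫ ω, (τ i ω : ℝ) ∂μ = 1 + ∑ j ∈ Finset.Icc 1 i, 1 / ((w : ℝ) + j) :=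
  anchorhash_recursive_expectation_general μ m w τ h_meas h0 hrec
end

section
/- Let w ≥ 1 and define e_i for i ≥ 0 by e_0 = 1 and e_i = w/(w+i) + (1/(w+i))·∑_{j=0}^{i-1}(1 + e_j) for i ≥ 1. Then e_i = 1 + ∑_{j=1}^{i} 1/(w+j) for all i ≥ 0. -/
open Finset

section MultipliedRecurrence

variable {w : ℝ} {e : ℕ → ℝ}

/-- Subtracting the multiplied recurrence at `n` from the one at `n + 1` leaves
`(w + n + 1) * (e (n + 1) - e n) = 1`. -/
theorem succ_eq_add_inv_of_mul_eq_sum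
    (hmul : ∀ i : ℕ, (w + i) * e i = w + ∑ j ∈ range i, (1 + e j)) (n : ℕ)
    (hn : w + n + 1 ≠ 0) :
    e (n + 1) = e n + 1 / (w + (n + 1 : ℕ)) := by
  have h := hmul (n + 1)
  rw [sum_range_succ, ← add_assoc, ← hmul n] at h
  push_cast [← add_assoc] at h ⊢
  field_simp
  linarith

theorem eq_one_add_sum_inv_of_mul_eq_sum (hw : 0 ≤ w) (h0 : e 0 = 1)
    (hmul : ∀ i : ℕ, (w + i) * e i = w + ∑ j ∈ range i, (1 + e j)) (i : ℕ) :
    e i = 1 + ∑ j ∈ Icc 1 i, 1 / (w + j) := by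
  induction i with
  | zero => simp [h0]
  | succ n ih =>
    rw [succ_eq_add_inv_of_mul_eq_sum hmul n (by positivity), ih,
      sum_Icc_succ_top (Nat.le_add_left 1 n)]
    ring

end MultipliedRecurrence

theorem anchorhash_expectation_recurrence_general (w : ℕ) (e : ℕ → ℝ)
    (h0 : e 0 = 1)
    (hrec : ∀ i, 1 ≤ i →
      e i = (w : ℝ) / ((w : ℝ) + i)
        + (1 / ((w : ℝ) + i)) * ∑ j ∈ Finset.range i, (1 + e j)) :
    ∀ i, e i = 1 + ∑ j ∈ Finset.Icc 1 i, 1 / ((w : ℝ) + j) := by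
  have hmul : ∀ i : ℕ, ((w : ℝ) + i) * e i = w + ∑ j ∈ range i, (1 + e j) := by
    rintro (_ | i)
    · simp [h0]
    · have hne : (w : ℝ) + (i + 1 : ℕ) ≠ 0 := by positivity
      rw [hrec (i + 1) (Nat.succ_pos i)]
      field_simp
  exact eq_one_add_sum_inv_of_mul_eq_sum (Nat.cast_nonneg w) h0 hmul

theorem anchorhash_expectation_recurrence (w : ℕ) (hw : 1 ≤ w) (e : ℕ → ℝ)
    (h0 : e 0 = 1)
    (hrec : ∀ i, 1 ≤ i →
      e i = (w : ℝ) / ((w : ℝ) + i)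
        + (1 / ((w : ℝ) + i)) * ∑ j ∈ Finset.range i, (1 + e j)) :
    ∀ i, e i = 1 + ∑ j ∈ Finset.Icc 1 i, 1 / ((w : ℝ) + j) :=
  anchorhash_expectation_recurrence_general w e h0 hrec
end

section
/- In the AnchorHash removal process starting from Anchor A with successive random removals, after any sequence of removals and additions the map from keys to buckets produced by GetBucket changes on exactly the set of keys previously mapped to b when bucket b is removed (those keys are remapped uniformly to W \ {b}), and changes on exactly the set of keys that get mapped to b when the last-removed bucket b is re-added (all other keys retain their mapping). -/
open Finset

variable {α U : Type*} [DecidableEq α]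

/-- AnchorHash lookup with removal stack `R` (head = most recently removed bucket).
With working set `A \ R.toFinset`, a key first gets bucket `H A k`; whenever the
current bucket is the removed bucket at the top of the (remaining) stack, the key is
rehashed via `H` into the working set recorded just after that bucket's removal. -/
def anchorLookup (H : Finset α → U → α) (A : Finset α) : List α → U → α
  | [], k => H A k
  | b :: R, k =>
      if anchorLookup H A R k = b then H (A \ (b :: R).toFinset) k
      else anchorLookup H A R k

/-- **Minimal disruption for AnchorHash.** For any removal stack `R` (distinct buckets
of `A`) with working set `W = A \ R.toFinset`:
(i) upon removal of a working bucket `b`, a key changes its bucket iff it was mapped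
to `b`, and in that case it is remapped to a bucket of `W \ {b}`;
(ii) upon a bucket addition (which re-adds the most recently removed bucket `b`), a key
changes its bucket iff it is now mapped to `b`, and every key recovers exactly the
bucket it had before `b` was removed. -/
theorem anchorhash_minimal_disruption
    (H : Finset α → U → α) (A : Finset α)
    (h_mem : ∀ B : Finset α, B.Nonempty → ∀ k, H B k ∈ B)
    (R : List α) (hnodup : R.Nodup) (hRA : ∀ b ∈ R, b ∈ A)
    (b : α) (hb : b ∈ A \ R.toFinset) (hne : (A \ (b :: R).toFinset).Nonempty) :
    -- (i) removal of `b` : keys not mapped to `b` keep their bucket,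
    (∀ k : U, anchorLookup H A R k ≠ b →
        anchorLookup H A (b :: R) k = anchorLookup H A R k)
      -- keys mapped to `b` are remapped to a member of `W \ {b}`,
      ∧ (∀ k : U, anchorLookup H A R k = b →
          anchorLookup H A (b :: R) k ∈ (A \ R.toFinset) \ {b})
      -- so the mapping changes exactly on the keys previously mapped to `b`;
      ∧ (∀ k : U, anchorLookup H A (b :: R) k ≠ anchorLookup H A R k ↔
          anchorLookup H A R k = b)
      -- (ii) re-adding the last removed bucket `b` restores the previous mapping:
      -- keys change exactly when they are (re)mapped to `b`, and every key gets
      -- exactly the bucket it had before `b` was removed.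
      ∧ (∀ k : U, anchorLookup H A R k ≠ anchorLookup H A (b :: R) k ↔
          anchorLookup H A R k = b) := by
  have hset : A \ (b :: R).toFinset = (A \ R.toFinset) \ {b} := by
    ext x
    simp [List.toFinset_cons, Finset.mem_sdiff, Finset.mem_insert]
    tauto
  have key : ∀ k : U, anchorLookup H A R k = b →
      anchorLookup H A (b :: R) k ∈ (A \ R.toFinset) \ {b} := by
    intro k hk
    have : anchorLookup H A (b :: R) k = H (A \ (b :: R).toFinset) k := by
      simp [anchorLookup, hk]
    rw [this, ← hset]
    exact h_mem _ hne k
  have keep : ∀ k : U, anchorLookup H A R k ≠ b →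
      anchorLookup H A (b :: R) k = anchorLookup H A R k := by
    intro k hk; simp [anchorLookup, hk]
  refine ⟨keep, key, ?_, ?_⟩
  · intro k
    constructor
    · intro h; by_contra hk; exact h (keep k hk)
    · intro hk
      have := key k hk
      rw [Finset.mem_sdiff, Finset.mem_singleton] at this
      rw [hk]; exact this.2
  · intro k
    constructor
    · intro h; by_contra hk; exact h (keep k hk).symm
    · intro hk
      have := key k hk
      rw [Finset.mem_sdiff, Finset.mem_singleton] at this
      rw [hk]; exact fun e => this.2 e.symm
end

section
/- For integers 1 ≤ w ≤ a and any sequence of reals x_0, ..., x_{a-w} with x_0 = 1 and x_{r+1} ≤ x_r + (1 + ln(a/w))/(a−r), the final value satisfies x_{a-w} ≤ (1 + ln(a/w))^2. -/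
/-!
Summing the recurrence gives `x (a - w) ≤ 1 + (1 + ℓ) ∑_{r < a - w} 1 / (a - r)` with
`ℓ = log (a / w)`. Since `1 / t ≤ log t - log (t - 1)`, this partial harmonic sum telescopes to
at most `log a - log w = ℓ`, and `1 + (1 + ℓ) ℓ ≤ (1 + ℓ) ^ 2` because `ℓ ≥ 0`.
-/

open Real Finset

namespace Real

theorem inv_le_log_sub_log_sub_one {t : ℝ} (ht : 1 < t) : t⁻¹ ≤ log t - log (t - 1) := by
  have ht₀ : 0 < t := by linarith
  have ht₁ : 0 < t - 1 := by linarith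
  have h := log_le_sub_one_of_pos (div_pos ht₁ ht₀)
  rw [log_div ht₁.ne' ht₀.ne'] at h
  have hquot : (t - 1) / t - 1 = -t⁻¹ := by field_simp; ring
  linarith

theorem sum_range_inv_sub_le_log_sub_log {a : ℝ} {n : ℕ} (hn : (n : ℝ) < a) :
    ∑ r ∈ range n, (a - r)⁻¹ ≤ log a - log (a - n) := by
  induction n with
  | zero => simp
  | succ n ih =>
    have hn' : (n : ℝ) < a := by push_cast at hn; linarith
    have hstep := inv_le_log_sub_log_sub_one (t := a - n) (by push_cast at hn; linarith)
    rw [sum_range_succ, Nat.cast_succ, ← sub_sub]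
    linarith [ih hn']

end Real

theorem le_add_sum_range_of_succ_le {x d : ℕ → ℝ} {n : ℕ}
    (h : ∀ r < n, x (r + 1) ≤ x r + d r) : x n ≤ x 0 + ∑ r ∈ range n, d r := by
  have hincr : ∑ r ∈ range n, (x (r + 1) - x r) ≤ ∑ r ∈ range n, d r :=
    sum_le_sum fun r hr => by linarith [h r (mem_range.mp hr)]
  rw [sum_range_sub] at hincr
  linarith

theorem anchorhash_memory_accesses_final (w a : ℕ) (hw : 1 ≤ w) (hwa : w ≤ a)
    (x : ℕ → ℝ) (hx0 : x 0 = 1)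
    (hrec : ∀ r, r < a - w →
      x (r + 1) ≤ x r + (1 + Real.log ((a : ℝ) / (w : ℝ))) / ((a : ℝ) - r)) :
    x (a - w) ≤ (1 + Real.log ((a : ℝ) / (w : ℝ))) ^ 2 := by
  set ℓ := Real.log ((a : ℝ) / (w : ℝ))
  have hw₀ : (0 : ℝ) < w := by exact_mod_cast hw
  have hwa' : (w : ℝ) ≤ a := by exact_mod_cast hwa
  have hℓ₀ : 0 ≤ ℓ := log_nonneg ((one_le_div hw₀).mpr hwa')
  have hlast : (a : ℝ) - ((a - w : ℕ) : ℝ) = w := by rw [Nat.cast_sub hwa]; ring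
  have hharmonic : ∑ r ∈ range (a - w), ((a : ℝ) - r)⁻¹ ≤ ℓ := by
    have h := sum_range_inv_sub_le_log_sub_log (a := (a : ℝ)) (n := a - w) (by linarith)
    rwa [hlast, ← log_div (by linarith) hw₀.ne'] at h
  calc x (a - w)
      ≤ x 0 + ∑ r ∈ range (a - w), (1 + ℓ) / ((a : ℝ) - r) := le_add_sum_range_of_succ_le hrec
    _ = 1 + (1 + ℓ) * ∑ r ∈ range (a - w), ((a : ℝ) - r)⁻¹ := by
      simp only [hx0, div_eq_mul_inv, mul_sum]
    _ ≤ 1 + (1 + ℓ) * ℓ := by gcongr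
    _ ≤ (1 + ℓ) ^ 2 := by nlinarith
end
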